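/- arXiv:2506.22415 — 3 statements merged into one kernel-verified Lean document; each statement's English description precedes it below -/
import Mathlib

section
/- Let μ ∈ ℕⁿ and ν ∈ ℕᵐ be multi-indices, and for a multi-index α write x^{[α]} := x^α / α! (with α! = ∏ᵢ αᵢ!). Let T be a homogeneous linear operator from the span of the monomials {x^α : α ≤ μ componentwise} in ℝ[x₁,…,xₙ] to the span of {y^β : β ≤ ν componentwise} in ℝ[y₁,…,y_m], and define coefficients c_{α,β} ∈ ℝ by T(x^{[α]}) = Σ_{β ≤ ν} c_{α,β} y^{[β]}. Define the cosymbol of T as the constant-coefficient differential operator cosym_T := Σ_{α ≤ μ, β ≤ ν} c_{α,β} ∂^α δ^{ν−β}, where ∂ᵢ = ∂/∂xᵢ and δⱼ = ∂/∂yⱼ. Then for every f in the span of {x^α : α ≤ μ}, applying cosym_T to the polynomial f(x)·y^{[ν]} ∈ ℝ[x₁,…,xₙ,y₁,…,y_m] and then setting x₁ = ⋯ = xₙ = 0 yields exactly T(f) ∈ ℝ[y₁,…,y_m]. -/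
open MvPolynomial

/-- The normalized monomial `x^{[e]} = x^e / e!`, where `e! = ∏ i, (e i)!`. -/
noncomputable def nmon {σ : Type*} [Fintype σ] (e : σ → ℕ) : MvPolynomial σ ℝ :=
  ((∏ i, Nat.factorial (e i) : ℕ) : ℝ)⁻¹ •
    monomial (Finsupp.equivFunOnFinite.symm e) (1 : ℝ)

/-- The constant-coefficient differential operator `∂^e`: for each variable `i`, the
partial derivative in the variable `i` iterated `e i` times. -/
noncomputable def diffOp {σ : Type*} [Fintype σ] [DecidableEq σ] (e : σ → ℕ)
    (p : MvPolynomial σ ℝ) : MvPolynomial σ ℝ :=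
  Finset.univ.toList.foldr (fun i q => (fun r => pderiv i r)^[e i] q) p

/-!
By linearity in `f` it suffices to take `f = x^{[γ]}` with `γ ≤ μ`, and then `f(x) y^{[ν]}` is the
normalized monomial of exponent `(γ, ν)`. On normalized monomials `∂^e x^{[d]} = x^{[d - e]}` for
`e ≤ d` and `0` otherwise, so `∂^α δ^{ν - β}` sends it to `x^{[γ - α]} y^{[β]}` when `α ≤ γ`.
Setting `x = 0` kills every such term with `α ≠ γ`, which leaves
`∑_{β ≤ ν} c (γ, β) y^{[β]} = T (x^{[γ]})`.
-/

open Finset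

section nmon

variable {σ : Type*} [Fintype σ]

lemma equivFunOnFinite_symm_eq_zero_iff {a : σ → ℕ} :
    Finsupp.equivFunOnFinite.symm a = 0 ↔ a = 0 :=
  Finsupp.equivFunOnFinite.symm_apply_eq

lemma nmon_zero : nmon (0 : σ → ℕ) = 1 := by
  rw [nmon, equivFunOnFinite_symm_eq_zero_iff.mpr rfl, ← one_def]
  simp

lemma constantCoeff_nmon (a : σ → ℕ) : constantCoeff (nmon a) = if a = 0 then 1 else 0 := by
  classical
  rw [constantCoeff_eq, nmon, coeff_smul, coeff_monomial, eq_comm]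
  simp only [equivFunOnFinite_symm_eq_zero_iff]
  split_ifs with h <;> simp [h]

lemma prod_factorial_smul_nmon (e : σ → ℕ) :
    ((∏ i, Nat.factorial (e i) : ℕ) : ℝ) • nmon e
      = monomial (Finsupp.equivFunOnFinite.symm e) (1 : ℝ) := by
  rw [nmon, smul_smul, mul_inv_cancel₀ (by positivity), one_smul]

variable [DecidableEq σ]

lemma eq_sum_Iic_smul_nmon (μ : σ → ℕ) (p : MvPolynomial σ ℝ)
    (hp : ∀ γ : σ → ℕ, ¬ γ ≤ μ → coeff (Finsupp.equivFunOnFinite.symm γ) p = 0) :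
    p = ∑ γ ∈ Iic μ, (((∏ i, Nat.factorial (γ i) : ℕ) : ℝ) *
      coeff (Finsupp.equivFunOnFinite.symm γ) p) • nmon γ := by
  have hsupp : p.support ⊆ (Iic μ).map Finsupp.equivFunOnFinite.symm.toEmbedding := by
    intro v hv
    refine mem_map_equiv.mpr (mem_Iic.mpr ?_)
    by_contra hle
    exact mem_support_iff.mp hv (by simpa using hp _ hle)
  conv_lhs => rw [p.as_sum, sum_subset hsupp fun v _ hv => by
    rw [notMem_support_iff.mp hv, monomial_zero], sum_map]
  refine sum_congr rfl fun γ _ => ?_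
  rw [mul_comm, mul_smul, prod_factorial_smul_nmon, smul_monomial, smul_eq_mul, mul_one]
  rfl

lemma apply_eq_of_apply_nmon_eq {M : Type*} [AddCommMonoid M] [Module ℝ M] {μ : σ → ℕ}
    {L L' : MvPolynomial σ ℝ →ₗ[ℝ] M}
    (h : ∀ γ ≤ μ, L (nmon γ) = L' (nmon γ)) {p : MvPolynomial σ ℝ}
    (hp : ∀ γ : σ → ℕ, ¬ γ ≤ μ → coeff (Finsupp.equivFunOnFinite.symm γ) p = 0) :
    L p = L' p := by
  rw [eq_sum_Iic_smul_nmon μ p hp, map_sum, map_sum]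
  exact sum_congr rfl fun γ hγ => by rw [map_smul, map_smul, h γ (mem_Iic.mp hγ)]

lemma mul_prod_factorial_update_pred {d : σ → ℕ} {i : σ} (h : d i ≠ 0) :
    d i * ∏ j, Nat.factorial (Function.update d i (d i - 1) j) = ∏ j, Nat.factorial (d j) := by
  simp_rw [Function.apply_update (fun _ => Nat.factorial), prod_update_of_mem (mem_univ i),
    Fintype.prod_eq_mul_prod_compl i (fun j => Nat.factorial (d j)), ← mul_assoc,
    Nat.mul_factorial_pred h]
  rfl

lemma equivFunOnFinite_symm_sub_single {d : σ → ℕ} (i : σ) :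
    Finsupp.equivFunOnFinite.symm d - Finsupp.single i 1
      = Finsupp.equivFunOnFinite.symm (Function.update d i (d i - 1)) := by
  ext j
  rcases eq_or_ne j i with rfl | hj
  · simp
  · simp [hj]

lemma pderiv_nmon (i : σ) (d : σ → ℕ) :
    pderiv i (nmon d) = if d i = 0 then 0 else nmon (Function.update d i (d i - 1)) := by
  rw [nmon, Derivation.map_smul, pderiv_monomial, equivFunOnFinite_symm_sub_single, one_mul]
  split_ifs with h
  · simp [h]
  · rw [nmon, ← mul_prod_factorial_update_pred h, Nat.cast_mul, mul_inv, mul_comm, mul_smul,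
      smul_monomial, Finsupp.coe_equivFunOnFinite_symm, smul_eq_mul,
      inv_mul_cancel₀ (by exact_mod_cast h)]

lemma iterate_pderiv_nmon (i : σ) (k : ℕ) (d : σ → ℕ) :
    (fun r => pderiv i r)^[k] (nmon d) =
      if k ≤ d i then nmon (Function.update d i (d i - k)) else 0 := by
  induction k with
  | zero => simp
  | succ k ih =>
    rw [Function.iterate_succ_apply', ih]
    by_cases hk : k + 1 ≤ d i
    · rw [if_pos (by omega), pderiv_nmon, Function.update_self, if_neg (by omega),
        Function.update_idem, Nat.sub_sub, if_pos hk]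
    · rw [if_neg hk]
      split_ifs
      · rw [pderiv_nmon, Function.update_self, if_pos (by omega)]
      · exact map_zero _

lemma foldr_iterate_pderiv_nmon (e d : σ → ℕ) {l : List σ} (hl : l.Nodup) :
    l.foldr (fun i q => (fun r => pderiv i r)^[e i] q) (nmon d) =
      if ∀ i ∈ l, e i ≤ d i then nmon (fun j => if j ∈ l then d j - e j else d j) else 0 := by
  induction l with
  | nil => simp
  | cons a l ih =>
    obtain ⟨ha, hl⟩ := List.nodup_cons.mp hl
    rw [List.foldr_cons, ih hl]
    by_cases hle : ∀ i ∈ l, e i ≤ d i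
    · rw [if_pos hle, iterate_pderiv_nmon, if_neg ha]
      simp only [List.forall_mem_cons, and_iff_left hle]
      split_ifs
      · congr 1
        funext j
        rcases eq_or_ne j a with rfl | hj
        · simp [ha]
        · simp [hj]
      · rfl
    · rw [if_neg hle, if_neg fun h => hle fun i hi => h i (List.mem_cons_of_mem a hi)]
      exact Function.iterate_fixed (map_zero _) _

open Classical in
lemma diffOp_nmon (e d : σ → ℕ) :
    diffOp e (nmon d) = if e ≤ d then nmon (d - e) else 0 := by
  simp only [diffOp, foldr_iterate_pderiv_nmon e d (nodup_toList univ), mem_toList, mem_univ,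
    forall_const, if_true]
  exact if_congr Pi.le_def.symm rfl rfl

noncomputable def diffOpₗ (e : σ → ℕ) : Module.End ℝ (MvPolynomial σ ℝ) :=
  univ.toList.foldr (fun i g => (pderiv i).toLinearMap ^ e i * g) 1

lemma diffOpₗ_apply (e : σ → ℕ) (p : MvPolynomial σ ℝ) : diffOpₗ e p = diffOp e p := by
  rw [diffOpₗ, diffOp]
  induction (univ : Finset σ).toList with
  | nil => rfl
  | cons a l ih =>
    rw [List.foldr_cons, List.foldr_cons, Module.End.mul_apply, ih, Module.End.pow_apply]
    rfl

end nmon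

section sum

variable {σ τ : Type*} [Fintype σ] [Fintype τ]

lemma nmon_sumElim (a : σ → ℕ) (b : τ → ℕ) :
    nmon (Sum.elim a b) = rename Sum.inl (nmon a) * rename Sum.inr (nmon b) := by
  simp only [nmon, map_smul, rename_monomial, smul_mul_smul_comm, monomial_mul, mul_one,
    Fintype.prod_sum_type, Sum.elim_inl, Sum.elim_inr, Nat.cast_mul, mul_inv]
  congr
  ext (i | j) <;> simp [Finsupp.mapDomain_apply, Finsupp.mapDomain_of_notMem_range,
    Sum.inl_injective, Sum.inr_injective]

lemma aeval_sumElim_zero_X_nmon (a : σ → ℕ) (b : τ → ℕ) :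
    aeval (Sum.elim (fun _ => (0 : MvPolynomial τ ℝ)) X) (nmon (Sum.elim a b))
      = if a = 0 then nmon b else 0 := by
  rw [nmon_sumElim, map_mul, aeval_rename, aeval_rename, Sum.elim_comp_inl, Sum.elim_comp_inr,
    aeval_zero', aeval_X_left_apply, constantCoeff_nmon]
  split_ifs <;> simp

lemma rename_inl_mul_nmon_sumElim_zero (γ : σ → ℕ) (ν : τ → ℕ) :
    rename Sum.inl (nmon γ) * nmon (Sum.elim (fun _ => 0) ν : σ ⊕ τ → ℕ)
      = nmon (Sum.elim γ ν) := by
  rw [nmon_sumElim, nmon_sumElim, show (fun _ => 0 : σ → ℕ) = 0 from rfl, nmon_zero, map_one,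
    one_mul]

end sum

section cosymbol

variable {σ τ : Type*} [Fintype σ] [DecidableEq σ] [Fintype τ] [DecidableEq τ]

lemma aeval_diffOp_nmon_sumElim {α γ : σ → ℕ} {β ν : τ → ℕ} (hβ : β ≤ ν) :
    aeval (Sum.elim (fun _ => (0 : MvPolynomial τ ℝ)) X)
      (diffOp (Sum.elim α fun j => ν j - β j) (nmon (Sum.elim γ ν)))
      = if α = γ then nmon β else 0 := by
  have hsub : Sum.elim γ ν - Sum.elim α (fun j => ν j - β j) = Sum.elim (γ - α) β := by
    ext (i | j)
    · rfl
    · exact Nat.sub_sub_self (hβ j)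
  rw [diffOp_nmon, hsub]
  by_cases hαγ : α ≤ γ
  · rw [if_pos (Sum.elim_le_elim_iff.mpr ⟨hαγ, fun j => Nat.sub_le _ _⟩),
      aeval_sumElim_zero_X_nmon]
    exact if_congr (tsub_eq_zero_iff_le.trans ⟨hαγ.antisymm, fun h => h.ge⟩) rfl rfl
  · rw [if_neg fun h => hαγ (Sum.elim_le_elim_iff.mp h).1, if_neg fun h => hαγ h.le, map_zero]

/-- `cosym_T = ∑_{α ≤ μ, β ≤ ν} c (α, β) ∂^α δ^{ν - β}`, acting on `ℝ[x, y]` with the `x`-variables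
indexed by `Sum.inl` and the `y`-variables by `Sum.inr`. -/
noncomputable def cosymbol (μ : σ → ℕ) (ν : τ → ℕ) (T : MvPolynomial σ ℝ →ₗ[ℝ] MvPolynomial τ ℝ) :
    Module.End ℝ (MvPolynomial (σ ⊕ τ) ℝ) :=
  ∑ α ∈ Iic μ, ∑ β ∈ Iic ν, (((∏ j, Nat.factorial (β j) : ℕ) : ℝ) *
    coeff (Finsupp.equivFunOnFinite.symm β) (T (nmon α))) • diffOpₗ (Sum.elim α fun j => ν j - β j)

lemma cosymbol_apply (μ : σ → ℕ) (ν : τ → ℕ) (T : MvPolynomial σ ℝ →ₗ[ℝ] MvPolynomial τ ℝ)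
    (p : MvPolynomial (σ ⊕ τ) ℝ) :
    cosymbol μ ν T p = ∑ α ∈ Iic μ, ∑ β ∈ Iic ν, (((∏ j, Nat.factorial (β j) : ℕ) : ℝ) *
      coeff (Finsupp.equivFunOnFinite.symm β) (T (nmon α))) •
        diffOp (Sum.elim α fun j => ν j - β j) p := by
  simp only [cosymbol, LinearMap.sum_apply, LinearMap.smul_apply, diffOpₗ_apply]

lemma aeval_cosymbol_nmon {μ : σ → ℕ} {ν : τ → ℕ} {T : MvPolynomial σ ℝ →ₗ[ℝ] MvPolynomial τ ℝ}
    (hT : ∀ α ≤ μ, ∀ β : τ → ℕ, ¬ β ≤ ν →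
      coeff (Finsupp.equivFunOnFinite.symm β) (T (nmon α)) = 0)
    {γ : σ → ℕ} (hγ : γ ≤ μ) :
    aeval (Sum.elim (fun _ => (0 : MvPolynomial τ ℝ)) X) (cosymbol μ ν T (nmon (Sum.elim γ ν)))
      = T (nmon γ) := by
  simp only [cosymbol_apply, map_sum, map_smul]
  rw [sum_congr rfl fun α _ => sum_congr rfl fun β hβ => by
    rw [aeval_diffOp_nmon_sumElim (mem_Iic.mp hβ)]]
  simp only [smul_ite, smul_zero, sum_ite_irrel, sum_const_zero, sum_ite_eq']
  rw [if_pos (mem_Iic.mpr hγ)]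
  exact (eq_sum_Iic_smul_nmon ν _ (hT γ hγ)).symm

end cosymbol

theorem cosymbol_apply_eq_general
    (n m : ℕ) (μ : Fin n → ℕ) (ν : Fin m → ℕ)
    (T : MvPolynomial (Fin n) ℝ →ₗ[ℝ] MvPolynomial (Fin m) ℝ)
    (hT : ∀ α : Fin n → ℕ, α ≤ μ → ∀ β : Fin m → ℕ, ¬ β ≤ ν →
      coeff (Finsupp.equivFunOnFinite.symm β) (T (nmon α)) = 0)
    (f : MvPolynomial (Fin n) ℝ)
    (hf : ∀ γ : Fin n → ℕ, ¬ γ ≤ μ → coeff (Finsupp.equivFunOnFinite.symm γ) f = 0) :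
    aeval (Sum.elim (fun _ => (0 : MvPolynomial (Fin m) ℝ)) (fun j => X j))
      (∑ α ∈ Finset.Iic μ, ∑ β ∈ Finset.Iic ν,
        (((∏ j, Nat.factorial (β j) : ℕ) : ℝ) *
            coeff (Finsupp.equivFunOnFinite.symm β) (T (nmon α))) •
          diffOp (Sum.elim α (fun j => ν j - β j))
            ((rename Sum.inl f) * nmon (Sum.elim (fun _ => 0) ν : Fin n ⊕ Fin m → ℕ)))
      = T f := by
  rw [← cosymbol_apply]
  let L := (aeval (Sum.elim (fun _ => (0 : MvPolynomial (Fin m) ℝ)) X)).toLinearMap ∘ₗ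
    cosymbol μ ν T ∘ₗ LinearMap.mulRight ℝ (nmon (Sum.elim (fun _ => 0) ν)) ∘ₗ
    (rename Sum.inl).toLinearMap
  refine apply_eq_of_apply_nmon_eq (L := L) (fun γ hγ => ?_) hf
  simp only [L, LinearMap.comp_apply, AlgHom.toLinearMap_apply, LinearMap.mulRight_apply,
    rename_inl_mul_nmon_sumElim_zero, aeval_cosymbol_nmon hT hγ]

/-- **The cosymbol formula.**  Let `T` be a homogeneous linear operator from the span of the
monomials `x^α`, `α ≤ μ`, to the span of the monomials `y^β`, `β ≤ ν`, and write
`T (x^{[α]}) = ∑_{β ≤ ν} c (α, β) y^{[β]}` (so `c (α, β) = β! ⬝ coeff_β (T x^{[α]})`).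
Then for every `f` in the span of the `x^α` with `α ≤ μ`, applying the cosymbol
`cosym_T = ∑_{α ≤ μ, β ≤ ν} c (α, β) ∂^α δ^{ν - β}` to `f(x) ⬝ y^{[ν]}` and then setting
all the `x`-variables to `0` yields exactly `T f`. -/
theorem cosymbol_apply_eq
    (n m : ℕ) (μ : Fin n → ℕ) (ν : Fin m → ℕ)
    (T : MvPolynomial (Fin n) ℝ →ₗ[ℝ] MvPolynomial (Fin m) ℝ)
    (hT : ∀ α : Fin n → ℕ, α ≤ μ → ∀ β : Fin m → ℕ, ¬ β ≤ ν →
      coeff (Finsupp.equivFunOnFinite.symm β) (T (nmon α)) = 0)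
    (hhom : ∃ e : ℤ, ∀ α : Fin n → ℕ, α ≤ μ → ∀ β : Fin m →₀ ℕ,
      coeff β (T (nmon α)) ≠ 0 → ((∑ j, β j : ℕ) : ℤ) = (∑ i, α i : ℤ) + e)
    (f : MvPolynomial (Fin n) ℝ)
    (hf : ∀ γ : Fin n → ℕ, ¬ γ ≤ μ → coeff (Finsupp.equivFunOnFinite.symm γ) f = 0) :
    aeval (Sum.elim (fun _ => (0 : MvPolynomial (Fin m) ℝ)) (fun j => X j))
      (∑ α ∈ Finset.Iic μ, ∑ β ∈ Finset.Iic ν,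
        (((∏ j, Nat.factorial (β j) : ℕ) : ℝ) *
            coeff (Finsupp.equivFunOnFinite.symm β) (T (nmon α))) •
          diffOp (Sum.elim α (fun j => ν j - β j))
            ((rename Sum.inl f) * nmon (Sum.elim (fun _ => 0) ν : Fin n ⊕ Fin m → ℕ)))
      = T f :=
  cosymbol_apply_eq_general n m μ ν T hT f hf
end

section
/- Let a, b, c be nonnegative real numbers. Then the following are equivalent: (1) b² ≥ ac; (2) for every integer d ≥ 4 and every sequence (d_0, d_1, …, d_d) of nonnegative real numbers that is log-concave and has no internal zeros, the sequence (e_0, …, e_{d−4}) defined by e_j = 6a · C(j+3,3) · C(d−3−j,1) · d_{j+3} + 4b · C(j+2,2) · C(d−2−j,2) · d_{j+2} + 6c · C(j+1,1) · C(d−1−j,3) · d_{j+1} (where C(n,r) is the binomial coefficient) is log-concave and has no internal zeros. -/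
/-- The finite sequence `a 0, …, a N` is log-concave: `a k ^ 2 ≥ a (k-1) * a (k+1)`
for all `0 < k < N`. -/
def IsLogConcave (a : ℕ → ℝ) (N : ℕ) : Prop :=
  ∀ k : ℕ, 0 < k → k < N → a (k - 1) * a (k + 1) ≤ a k ^ 2

/-- The finite sequence `a 0, …, a N` has no internal zeros: there are no indices
`i < j < l ≤ N` with `a i ≠ 0`, `a j = 0` and `a l ≠ 0`. -/
def HasNoInternalZeros (a : ℕ → ℝ) (N : ℕ) : Prop :=
  ∀ i j l : ℕ, i < j → j < l → l ≤ N → a i ≠ 0 → a l ≠ 0 → a j ≠ 0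

/-!
Write `u = ds` and `d = j + s + 4`. The binomial factors turn the coefficient into
`e j = a A(j,s) u_{j+3} + b B(j,s) u_{j+2} + c A(s,j) u_{j+1}`, where
`A(x,y) = (x+1)(x+2)(x+3)(y+1)` and `B(x,y) = (x+1)(x+2)(y+1)(y+2)`.
Expanding `e_k² - e_{k-1} e_{k+1}` gives nine cross terms. All but the `ac` term are nonnegative by
log-concavity of `u`, in the form `u_i u_{l+1} ≤ u_{i+1} u_l` (valid because `u` has no internal
zeros), and by polynomial inequalities between the weights; the `ac` term is paid for by the `b²`
term, using `b² ≥ ac`, and by the slack in the `a²` and `c²` terms. The zeros of `e` are controlled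
by the interval on which `u` is nonzero, and `b² ≥ ac` excludes the only way to open a gap,
`b = 0 < a, c`.
Conversely, if `u` is the spike at `n + 3` and `d = 2n + 6`, log-concavity of `e` at `n + 1` reads
`ac (n+1)² ≤ b² (n+2)²`; letting `n → ∞` gives `b² ≥ ac`.
-/

section Sequences

variable {u : ℕ → ℝ} {N : ℕ}

theorem HasNoInternalZeros.ne_zero_of_le_of_le (h : HasNoInternalZeros u N) {i m l : ℕ}
    (hi : u i ≠ 0) (hl : u l ≠ 0) (him : i ≤ m) (hml : m ≤ l) (hlN : l ≤ N) : u m ≠ 0 := by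
  rcases him.eq_or_lt with rfl | him
  · exact hi
  rcases hml.eq_or_lt with rfl | hml
  · exact hl
  exact h i m l him hml hlN hi hl

theorem IsLogConcave.mul_succ_le_succ_mul_of_pos (hlc : IsLogConcave u N) {i l : ℕ}
    (hpos : ∀ m, i ≤ m → m ≤ l + 1 → 0 < u m) (hil : i ≤ l) (hlN : l + 1 ≤ N) :
    u i * u (l + 1) ≤ u (i + 1) * u l := by
  induction l, hil using Nat.le_induction with
  | base => rw [mul_comm]
  | succ l hil ih =>
    have ih := ih (fun m h₁ h₂ => hpos m h₁ (by omega)) (by omega)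
    have hstep : u l * u (l + 2) ≤ u (l + 1) ^ 2 := hlc (l + 1) (by omega) (by omega)
    have hu₁ : 0 < u (l + 1) := hpos (l + 1) (by omega) (by omega)
    refine le_of_mul_le_mul_right ?_ hu₁
    calc u i * u (l + 2) * u (l + 1) = u i * u (l + 1) * u (l + 2) := by ring
      _ ≤ u (i + 1) * u l * u (l + 2) := by
        gcongr
        exact (hpos _ (by omega) (by omega)).le
      _ = u (i + 1) * (u l * u (l + 2)) := by ring
      _ ≤ u (i + 1) * u (l + 1) ^ 2 := by
        gcongr
        exact (hpos _ (by omega) (by omega)).le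
      _ = u (i + 1) * u (l + 1) * u (l + 1) := by ring

theorem IsLogConcave.mul_succ_le_succ_mul (hlc : IsLogConcave u N) (hu : ∀ m ≤ N, 0 ≤ u m)
    (hniz : HasNoInternalZeros u N) {i l : ℕ} (hil : i ≤ l) (hlN : l + 1 ≤ N) :
    u i * u (l + 1) ≤ u (i + 1) * u l := by
  have hrhs : 0 ≤ u (i + 1) * u l := mul_nonneg (hu _ (by omega)) (hu _ (by omega))
  by_cases hi : u i = 0
  · simpa [hi] using hrhs
  by_cases hl : u (l + 1) = 0
  · simpa [hl] using hrhs
  refine hlc.mul_succ_le_succ_mul_of_pos (fun m him hml => ?_) hil hlN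
  exact (hu m (by omega)).lt_of_ne' (hniz.ne_zero_of_le_of_le hi hl him hml hlN)

theorem isLogConcave_single (m : ℕ) (x : ℝ) : IsLogConcave (Pi.single m x) N := by
  intro k hk _
  have : (Pi.single m x : ℕ → ℝ) (k - 1) * (Pi.single m x : ℕ → ℝ) (k + 1) = 0 := by
    simp only [Pi.single_apply, mul_ite, ite_mul, zero_mul, mul_zero]
    split_ifs <;> first | rfl | omega
  exact this ▸ sq_nonneg _

theorem hasNoInternalZeros_single (m : ℕ) (x : ℝ) : HasNoInternalZeros (Pi.single m x) N := by
  intro i j l hij hjl _ hi hl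
  simp only [Pi.single_apply, ne_eq, ite_eq_right_iff, not_forall] at hi hl
  obtain ⟨rfl, -⟩ := hi
  obtain ⟨rfl, -⟩ := hl
  omega

end Sequences

def productCoeff (a b c : ℝ) (d : ℕ) (ds : ℕ → ℝ) (j : ℕ) : ℝ :=
  6 * a * (Nat.choose (j + 3) 3) * (Nat.choose (d - 3 - j) 1) * ds (j + 3)
    + 4 * b * (Nat.choose (j + 2) 2) * (Nat.choose (d - 2 - j) 2) * ds (j + 2)
    + 6 * c * (Nat.choose (j + 1) 1) * (Nat.choose (d - 1 - j) 3) * ds (j + 1)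

def outerWeight (x y : ℝ) : ℝ := (x + 1) * (x + 2) * (x + 3) * (y + 1)

def innerWeight (x y : ℝ) : ℝ := (x + 1) * (x + 2) * (y + 1) * (y + 2)

theorem innerWeight_comm (x y : ℝ) : innerWeight x y = innerWeight y x := by
  unfold innerWeight; ring

theorem outerWeight_pos {x y : ℝ} (hx : 0 ≤ x) (hy : 0 ≤ y) : 0 < outerWeight x y := by
  unfold outerWeight; positivity

theorem innerWeight_pos {x y : ℝ} (hx : 0 ≤ x) (hy : 0 ≤ y) : 0 < innerWeight x y := by
  unfold innerWeight; positivity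

theorem Nat.six_mul_choose_three (n : ℕ) : 6 * (n + 3).choose 3 = (n + 1) * (n + 2) * (n + 3) := by
  change Nat.factorial 3 * _ = _
  rw [← Nat.descFactorial_eq_factorial_mul_choose]
  simp only [Nat.descFactorial_succ, Nat.descFactorial_zero, Nat.reduceSubDiff, Nat.sub_zero]
  ring

theorem Nat.two_mul_choose_two (n : ℕ) : 2 * (n + 2).choose 2 = (n + 1) * (n + 2) := by
  change Nat.factorial 2 * _ = _
  rw [← Nat.descFactorial_eq_factorial_mul_choose]
  simp only [Nat.descFactorial_succ, Nat.descFactorial_zero, Nat.reduceSubDiff, Nat.sub_zero]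
  ring

theorem productCoeff_eq {a b c : ℝ} {ds : ℕ → ℝ} {d j s : ℕ} (hd : d = j + s + 4) :
    productCoeff a b c d ds j = a * outerWeight j s * ds (j + 3)
      + b * innerWeight j s * ds (j + 2) + c * outerWeight s j * ds (j + 1) := by
  subst hd
  rw [productCoeff, show j + s + 4 - 3 - j = s + 1 by omega,
    show j + s + 4 - 2 - j = s + 2 by omega, show j + s + 4 - 1 - j = s + 3 by omega,
    Nat.choose_one_right, Nat.choose_one_right]
  have hj₃ : (6 : ℝ) * (j + 3).choose 3 = (j + 1) * (j + 2) * (j + 3) := by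
    exact_mod_cast Nat.six_mul_choose_three j
  have hs₃ : (6 : ℝ) * (s + 3).choose 3 = (s + 1) * (s + 2) * (s + 3) := by
    exact_mod_cast Nat.six_mul_choose_three s
  have hj₂ : (2 : ℝ) * (j + 2).choose 2 = (j + 1) * (j + 2) := by
    exact_mod_cast Nat.two_mul_choose_two j
  have hs₂ : (2 : ℝ) * (s + 2).choose 2 = (s + 1) * (s + 2) := by
    exact_mod_cast Nat.two_mul_choose_two s
  unfold outerWeight innerWeight
  push_cast
  linear_combination (a * (s + 1) * ds (j + 3)) * hj₃ + (c * (j + 1) * ds (j + 1)) * hs₃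
    + (2 * b * (s + 2).choose 2 * ds (j + 2)) * hj₂ + (b * (j + 1) * (j + 2) * ds (j + 2)) * hs₂

section Weights

variable {x y : ℝ}

theorem outerWeight_logConcave (hx : 0 ≤ x) (hy : 0 ≤ y) :
    outerWeight x (y + 2) * outerWeight (x + 2) y ≤ outerWeight (x + 1) (y + 1) ^ 2 := by
  rw [← sub_nonneg]
  unfold outerWeight
  ring_nf
  positivity

theorem innerWeight_logConcave (hx : 0 ≤ x) (hy : 0 ≤ y) :
    innerWeight x (y + 2) * innerWeight (x + 2) y ≤ innerWeight (x + 1) (y + 1) ^ 2 := by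
  rw [← sub_nonneg]
  unfold innerWeight
  ring_nf
  positivity

theorem outerWeight_mul_outerWeight_le (hx : 0 ≤ x) (hy : 0 ≤ y) :
    outerWeight x (y + 2) * outerWeight y (x + 2) ≤ innerWeight (x + 1) (y + 1) ^ 2 := by
  rw [← sub_nonneg]
  unfold outerWeight innerWeight
  ring_nf
  positivity

theorem outerWeight_innerWeight_cross_le (hx : 0 ≤ x) (hy : 0 ≤ y) :
    outerWeight x (y + 2) * innerWeight (x + 2) y + innerWeight x (y + 2) * outerWeight (x + 2) y
      ≤ 2 * (outerWeight (x + 1) (y + 1) * innerWeight (x + 1) (y + 1)) := by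
  have hsq : 0 ≤ x ^ 3 * y * (x - y) ^ 2 := by positivity
  refine (le_add_of_nonneg_right hsq).trans ?_
  rw [← sub_nonneg]
  unfold outerWeight innerWeight
  ring_nf
  positivity

theorem outerWeight_coupling_le (hx : 0 ≤ x) (hy : 0 ≤ y) :
    outerWeight x (y + 2) * outerWeight y (x + 2) + outerWeight (y + 2) x * outerWeight (x + 2) y
        + innerWeight x (y + 2) * innerWeight (x + 2) y
      ≤ innerWeight (x + 1) (y + 1) ^ 2
        + 2 * (outerWeight (x + 1) (y + 1) * outerWeight (y + 1) (x + 1))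
        + 2 * (outerWeight (x + 1) (y + 1) ^ 2
          - outerWeight x (y + 2) * outerWeight (x + 2) y) := by
  have hsq : 0 ≤ 2 * x ^ 2 * y ^ 2 * (2 * x - y) ^ 2 + x * y ^ 2 * (4 * y - 5 * x) ^ 2 := by
    positivity
  refine (le_add_of_nonneg_right hsq).trans ?_
  rw [← sub_nonneg]
  unfold outerWeight innerWeight
  ring_nf
  positivity

end Weights

theorem quadratic_form_nonneg {α γ K X Y : ℝ} (hα : 0 ≤ α) (hγ : 0 ≤ γ) (hKα : 0 ≤ K + 2 * α)
    (hKγ : 0 ≤ K + 2 * γ) (hX : 0 ≤ X) (hY : 0 ≤ Y) : 0 ≤ α * X ^ 2 + γ * Y ^ 2 + K * X * Y := by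
  rcases le_total α γ with h | h
  · nlinarith [mul_nonneg hα (sq_nonneg (X - Y)), mul_nonneg (sub_nonneg.2 h) (sq_nonneg Y),
      mul_nonneg hKα (mul_nonneg hX hY)]
  · nlinarith [mul_nonneg hγ (sq_nonneg (X - Y)), mul_nonneg (sub_nonneg.2 h) (sq_nonneg X),
      mul_nonneg hKγ (mul_nonneg hX hY)]

-- The hypotheses on `R` are those on `P` mirrored: reverse `u` and swap `a` with `c`.
theorem three_term_mul_le_sq {a b c P₀ P₁ P₂ Q₀ Q₁ Q₂ R₀ R₁ R₂ : ℝ} {u : ℕ → ℝ}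
    (ha : 0 ≤ a) (hb : 0 ≤ b) (hc : 0 ≤ c) (hac : a * c ≤ b ^ 2)
    (hu : ∀ i ≤ 4, 0 ≤ u i) (hlc : ∀ i l, i ≤ l → l < 4 → u i * u (l + 1) ≤ u (i + 1) * u l)
    (hP₀ : 0 ≤ P₀) (hP₂ : 0 ≤ P₂) (hQ₀ : 0 ≤ Q₀) (hQ₂ : 0 ≤ Q₂) (hR₀ : 0 ≤ R₀) (hR₂ : 0 ≤ R₂)
    (hP : P₀ * P₂ ≤ P₁ ^ 2) (hQ : Q₀ * Q₂ ≤ Q₁ ^ 2) (hR : R₂ * R₀ ≤ R₁ ^ 2)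
    (hPR : P₀ * R₂ ≤ Q₁ ^ 2)
    (hPQ : P₀ * Q₂ + Q₀ * P₂ ≤ 2 * (P₁ * Q₁)) (hRQ : R₂ * Q₀ + Q₂ * R₀ ≤ 2 * (R₁ * Q₁))
    (hPc : P₀ * R₂ + R₀ * P₂ + Q₀ * Q₂ ≤ Q₁ ^ 2 + 2 * (P₁ * R₁) + 2 * (P₁ ^ 2 - P₀ * P₂))
    (hRc : R₂ * P₀ + P₂ * R₀ + Q₂ * Q₀ ≤ Q₁ ^ 2 + 2 * (R₁ * P₁) + 2 * (R₁ ^ 2 - R₂ * R₀)) :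
    (a * P₀ * u 2 + b * Q₀ * u 1 + c * R₀ * u 0) * (a * P₂ * u 4 + b * Q₂ * u 3 + c * R₂ * u 2)
      ≤ (a * P₁ * u 3 + b * Q₁ * u 2 + c * R₁ * u 1) ^ 2 := by
  have h₀₂ := hlc 0 1 (by norm_num) (by norm_num)
  have h₁₃ := hlc 1 2 (by norm_num) (by norm_num)
  have h₂₄ := hlc 2 3 (by norm_num) (by norm_num)
  have h₀₃ := hlc 0 2 (by norm_num) (by norm_num)
  have h₁₄ := hlc 1 3 (by norm_num) (by norm_num)
  have h₀₄ := hlc 0 3 (by norm_num) (by norm_num)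
  have hu₁ := hu 1 (by norm_num)
  have hu₂ := hu 2 (by norm_num)
  have hu₃ := hu 3 (by norm_num)
  have haa : 0 ≤ a ^ 2 * (P₀ * P₂) * (u 3 * u 3 - u 2 * u 4) := by
    have := sub_nonneg.2 h₂₄; positivity
  have hcc : 0 ≤ c ^ 2 * (R₀ * R₂) * (u 1 * u 1 - u 0 * u 2) := by
    have := sub_nonneg.2 h₀₂; positivity
  have hab₁ : 0 ≤ a * b * (Q₀ * P₂) * (u 2 * u 3 - u 1 * u 4) := by
    have := sub_nonneg.2 h₁₄; positivity
  have hab₂ : 0 ≤ a * b * (2 * (P₁ * Q₁) - (P₀ * Q₂ + Q₀ * P₂)) * (u 2 * u 3) := by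
    have := sub_nonneg.2 hPQ; positivity
  have hbc₁ : 0 ≤ b * c * (R₀ * Q₂) * (u 1 * u 2 - u 0 * u 3) := by
    have := sub_nonneg.2 h₀₃; positivity
  have hbc₂ : 0 ≤ b * c * (2 * (R₁ * Q₁) - (R₂ * Q₀ + Q₂ * R₀)) * (u 1 * u 2) := by
    have := sub_nonneg.2 hRQ; positivity
  have hac₁ : 0 ≤ a * c * (R₀ * P₂) * (u 1 * u 3 - u 0 * u 4) := by
    have := sub_nonneg.2 h₀₄; positivity
  have hac₂ : 0 ≤ a * c * (Q₁ ^ 2 - P₀ * R₂) * (u 2 * u 2 - u 1 * u 3) := by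
    have := sub_nonneg.2 hPR; have := sub_nonneg.2 h₁₃; positivity
  -- Moving `ac (Q₁² u₂² - Q₀ Q₂ u₁ u₃)` from the `b²` term to the `ac` term uses `b² ≥ ac`.
  have hbb : 0 ≤ (b ^ 2 - a * c) * (Q₁ ^ 2 * (u 2 * u 2) - Q₀ * Q₂ * (u 1 * u 3)) := by
    have := sub_nonneg.2 (mul_le_mul hQ h₁₃ (by positivity) (sq_nonneg Q₁))
    have := sub_nonneg.2 hac
    positivity
  have hquad := quadratic_form_nonneg (sub_nonneg.2 hP) (sub_nonneg.2 hR)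
    (K := Q₁ ^ 2 + 2 * (P₁ * R₁) - P₀ * R₂ - R₀ * P₂ - Q₀ * Q₂) (by linarith) (by linarith)
    (mul_nonneg ha hu₃) (mul_nonneg hc hu₁)
  linarith

section ProductCoeff

variable {a b c : ℝ} {d : ℕ} {ds : ℕ → ℝ}

theorem productCoeff_isLogConcave (ha : 0 ≤ a) (hb : 0 ≤ b) (hc : 0 ≤ c) (hac : a * c ≤ b ^ 2)
    (hds : ∀ i ≤ d, 0 ≤ ds i) (hlc : IsLogConcave ds d) (hniz : HasNoInternalZeros ds d) :
    IsLogConcave (productCoeff a b c d ds) (d - 4) := by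
  intro k hk hkd
  obtain ⟨q, rfl⟩ : ∃ q, k = q + 1 := ⟨k - 1, by omega⟩
  obtain ⟨r, rfl⟩ : ∃ r, d = q + r + 6 := ⟨d - (q + 6), by omega⟩
  rw [Nat.add_sub_cancel, show q + 1 + 1 = q + 2 from rfl,
    productCoeff_eq (j := q) (s := r + 2) (by omega),
    productCoeff_eq (j := q + 2) (s := r) (by omega),
    productCoeff_eq (j := q + 1) (s := r + 1) (by omega)]
  push_cast
  have hx : (0 : ℝ) ≤ q := q.cast_nonneg
  have hy : (0 : ℝ) ≤ r := r.cast_nonneg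
  have hRQ := outerWeight_innerWeight_cross_le hy hx
  have hRc := outerWeight_coupling_le hy hx
  rw [innerWeight_comm (r + 2), innerWeight_comm r, innerWeight_comm (r + 1)] at hRQ hRc
  exact three_term_mul_le_sq (u := fun t => ds (q + 1 + t)) ha hb hc hac
    (fun i hi => hds _ (by omega))
    (fun i l _ _ => hlc.mul_succ_le_succ_mul hds hniz (i := q + 1 + i) (l := q + 1 + l)
      (by omega) (by omega))
    (outerWeight_pos hx (by positivity)).le (outerWeight_pos (by positivity) hy).le
    (innerWeight_pos hx (by positivity)).le (innerWeight_pos (by positivity) hy).le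
    (outerWeight_pos (by positivity) hx).le (outerWeight_pos hy (by positivity)).le
    (outerWeight_logConcave hx hy) (innerWeight_logConcave hx hy) (outerWeight_logConcave hy hx)
    (outerWeight_mul_outerWeight_le hx hy) (outerWeight_innerWeight_cross_le hx hy) hRQ
    (outerWeight_coupling_le hx hy) hRc

theorem productCoeff_ne_zero_iff (ha : 0 ≤ a) (hb : 0 ≤ b) (hc : 0 ≤ c) (hds : ∀ i ≤ d, 0 ≤ ds i)
    {j : ℕ} (hj : j + 4 ≤ d) :
    productCoeff a b c d ds j ≠ 0 ↔
      a * ds (j + 3) ≠ 0 ∨ b * ds (j + 2) ≠ 0 ∨ c * ds (j + 1) ≠ 0 := by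
  obtain ⟨s, rfl⟩ : ∃ s, d = j + s + 4 := ⟨d - j - 4, by omega⟩
  have hx : (0 : ℝ) ≤ j := j.cast_nonneg
  have hy : (0 : ℝ) ≤ s := s.cast_nonneg
  have hA := outerWeight_pos hx hy
  have hB := innerWeight_pos hx hy
  have hC := outerWeight_pos hy hx
  have h₃ := hds (j + 3) (by omega)
  have h₂ := hds (j + 2) (by omega)
  have h₁ := hds (j + 1) (by omega)
  rw [productCoeff_eq rfl, mul_right_comm a, mul_right_comm b, mul_right_comm c, Ne,
    add_eq_zero_iff_of_nonneg (by positivity) (by positivity),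
    add_eq_zero_iff_of_nonneg (by positivity) (by positivity), mul_eq_zero_iff_right hA.ne',
    mul_eq_zero_iff_right hB.ne', mul_eq_zero_iff_right hC.ne']
  tauto

theorem productCoeff_hasNoInternalZeros (ha : 0 ≤ a) (hb : 0 ≤ b) (hc : 0 ≤ c)
    (hac : a * c ≤ b ^ 2) (hds : ∀ i ≤ d, 0 ≤ ds i) (hniz : HasNoInternalZeros ds d) :
    HasNoInternalZeros (productCoeff a b c d ds) (d - 4) := by
  intro i j l hij hjl hl hi hl'
  rw [productCoeff_ne_zero_iff ha hb hc hds (by omega)] at hi hl' ⊢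
  rcases eq_or_ne b 0 with rfl | hb₀
  · -- With `b = 0`, `b² ≥ ac` leaves a single shift of `ds`.
    rcases mul_eq_zero.1 (le_antisymm (by simpa using hac) (mul_nonneg ha hc)) with rfl | rfl
    · simp only [zero_mul, ne_eq, not_true_eq_false, false_or, mul_eq_zero, not_or] at hi hl' ⊢
      exact ⟨hi.1, hniz.ne_zero_of_le_of_le hi.2 hl'.2 (by omega) (by omega) (by omega)⟩
    · simp only [zero_mul, ne_eq, not_true_eq_false, or_false, mul_eq_zero, not_or] at hi hl' ⊢
      exact ⟨hi.1, hniz.ne_zero_of_le_of_le hi.2 hl'.2 (by omega) (by omega) (by omega)⟩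
  · obtain ⟨p, hp₁, hp₃, hp⟩ : ∃ p, i + 1 ≤ p ∧ p ≤ i + 3 ∧ ds p ≠ 0 := by
      rcases hi with h | h | h <;> exact ⟨_, by omega, by omega, right_ne_zero_of_mul h⟩
    obtain ⟨p', hp'₁, hp'₃, hp'⟩ : ∃ p, l + 1 ≤ p ∧ p ≤ l + 3 ∧ ds p ≠ 0 := by
      rcases hl' with h | h | h <;> exact ⟨_, by omega, by omega, right_ne_zero_of_mul h⟩
    exact Or.inr <| Or.inl <| mul_ne_zero hb₀ <|
      hniz.ne_zero_of_le_of_le hp hp' (by omega) (by omega) (by omega)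

end ProductCoeff

theorem le_of_forall_mul_add_one_sq_le {x y : ℝ} (h : ∀ n : ℕ, x * (n + 1) ^ 2 ≤ y * (n + 2) ^ 2) :
    x ≤ y := by
  by_contra! hyx
  obtain ⟨n, hn⟩ := exists_nat_gt (3 * |y| / (x - y))
  rw [div_lt_iff₀ (sub_pos.2 hyx)] at hn
  have hn₀ : (0 : ℝ) ≤ n := n.cast_nonneg
  nlinarith [h n, le_abs_self y, abs_nonneg y,
    mul_le_mul_of_nonneg_right hn.le (by positivity : (0 : ℝ) ≤ n + 1)]

theorem mul_sq_le_of_isLogConcave_productCoeff_single {a b c : ℝ} (n : ℕ)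
    (h : IsLogConcave (productCoeff a b c (2 * n + 6) (Pi.single (n + 3) 1)) (2 * n + 2)) :
    a * c * (n + 1) ^ 2 ≤ b ^ 2 * (n + 2) ^ 2 := by
  have key := h (n + 1) (by omega) (by omega)
  rw [Nat.add_sub_cancel, show n + 1 + 1 = n + 2 from rfl,
    productCoeff_eq (j := n) (s := n + 2) (by omega),
    productCoeff_eq (j := n + 2) (s := n) (by omega),
    productCoeff_eq (j := n + 1) (s := n + 1) (by omega)] at key
  simp only [Nat.cast_add, Nat.cast_ofNat, Nat.cast_one, Pi.single_eq_same, mul_one, ne_eq,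
    Nat.add_left_cancel_iff, Nat.add_right_cancel_iff, Nat.reduceEqDiff, Nat.add_eq_left,
    OfNat.one_ne_ofNat, OfNat.ofNat_ne_zero, OfNat.ofNat_ne_one, one_ne_zero, not_false_eq_true,
    Pi.single_eq_of_ne, mul_zero, add_zero, zero_add] at key
  have hB : 0 < innerWeight (n + 1) (n + 1) ^ 2 := by
    have := innerWeight_pos (x := n + 1) (y := n + 1) (by positivity) (by positivity)
    positivity
  refine le_of_mul_le_mul_right ?_ hB
  calc a * c * (n + 1) ^ 2 * innerWeight (n + 1) (n + 1) ^ 2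
      = (n + 2) ^ 2 * (a * outerWeight n (n + 2) * (c * outerWeight n (n + 2))) := by
        unfold outerWeight innerWeight; ring
    _ ≤ (n + 2) ^ 2 * (b * innerWeight (n + 1) (n + 1)) ^ 2 := by gcongr
    _ = b ^ 2 * (n + 2) ^ 2 * innerWeight (n + 1) (n + 1) ^ 2 := by ring

/-- For nonnegative reals `a b c`, one has `b ^ 2 ≥ a * c` if and only if for every `d ≥ 4`
and every nonnegative log-concave sequence `(d_0, …, d_d)` with no internal zeros, the
sequence `(e_0, …, e_{d-4})` given by
`e j = 6a⬝C(j+3,3)⬝C(d-3-j,1)⬝d_{j+3} + 4b⬝C(j+2,2)⬝C(d-2-j,2)⬝d_{j+2}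
  + 6c⬝C(j+1,1)⬝C(d-1-j,3)⬝d_{j+1}`
is log-concave with no internal zeros. -/
theorem sq_ge_mul_iff_convolution_logConcave
    (a b c : ℝ) (ha : 0 ≤ a) (hb : 0 ≤ b) (hc : 0 ≤ c) :
    b ^ 2 ≥ a * c ↔
      ∀ d : ℕ, 4 ≤ d → ∀ ds : ℕ → ℝ,
        (∀ i ≤ d, 0 ≤ ds i) → IsLogConcave ds d → HasNoInternalZeros ds d →
        (IsLogConcave
            (fun j => 6 * a * (Nat.choose (j + 3) 3) * (Nat.choose (d - 3 - j) 1) * ds (j + 3)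
              + 4 * b * (Nat.choose (j + 2) 2) * (Nat.choose (d - 2 - j) 2) * ds (j + 2)
              + 6 * c * (Nat.choose (j + 1) 1) * (Nat.choose (d - 1 - j) 3) * ds (j + 1))
            (d - 4) ∧
          HasNoInternalZeros
            (fun j => 6 * a * (Nat.choose (j + 3) 3) * (Nat.choose (d - 3 - j) 1) * ds (j + 3)
              + 4 * b * (Nat.choose (j + 2) 2) * (Nat.choose (d - 2 - j) 2) * ds (j + 2)
              + 6 * c * (Nat.choose (j + 1) 1) * (Nat.choose (d - 1 - j) 3) * ds (j + 1))
            (d - 4)) := by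
  refine ⟨fun hac d _ ds hds hlc hniz => ⟨productCoeff_isLogConcave ha hb hc hac hds hlc hniz,
    productCoeff_hasNoInternalZeros ha hb hc hac hds hniz⟩, fun h => ?_⟩
  refine le_of_forall_mul_add_one_sq_le fun n => mul_sq_le_of_isLogConcave_productCoeff_single n ?_
  have hspike : (0 : ℕ → ℝ) ≤ Pi.single (n + 3) 1 := Pi.single_nonneg.2 zero_le_one
  exact (h (2 * n + 6) (by omega) _ (fun i _ => hspike i) (isLogConcave_single _ _)
    (hasNoInternalZeros_single _ _)).1
end

section
/- Let (a_0, …, a_M) and (b_0, …, b_N) be log-concave sequences of nonnegative real numbers with no internal zeros. Then their convolution (c_0, …, c_{M+N}), defined by c_i = Σ_k a_k b_{i−k} (the sum over all k with 0 ≤ k ≤ M and 0 ≤ i−k ≤ N), is a log-concave sequence of nonnegative real numbers with no internal zeros. -/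
/-- The convolution of the finite sequences `a 0, …, a M` and `b 0, …, b N`:
`c i = ∑_k a k * b (i - k)`, the sum over all `k` with `0 ≤ k ≤ M` and `0 ≤ i - k ≤ N`. -/
noncomputable def seqConv (a : ℕ → ℝ) (M : ℕ) (b : ℕ → ℝ) (N : ℕ) : ℕ → ℝ :=
  fun i => ∑ k ∈ (Finset.range (M + 1)).filter (fun k => k ≤ i ∧ i - k ≤ N),
    a k * b (i - k)

/-!
Extend both sequences by zero to `ℤ`. For a nonnegative sequence `f` without internal zeros,
log-concavity propagates to all the `2 × 2` minors `f (i - 1) * f (j + 1) ≤ f i * f j`, `i ≤ j`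
(`f` is a Pólya frequency sequence of order 2). For `c = f ∗ g` the Cauchy–Binet identity writes
`c i ^ 2 - c (i - 1) * c (i + 1)` as a sum of products of a minor of `f` with a minor of `g`, so it
is nonnegative. The support of `c` is the sum of the supports of `f` and `g`; a sum of two intervals
is an interval.
-/

open Function Set
open scoped Pointwise

theorem Set.OrdConnected.add {α : Type*} [AddCommGroup α] [LinearOrder α] [IsOrderedAddMonoid α]
    {s t : Set α} (hs : s.OrdConnected) (ht : t.OrdConnected) : (s + t).OrdConnected := by
  refine ⟨?_⟩
  rintro _ ⟨a₁, ha₁, b₁, hb₁, rfl⟩ _ ⟨a₂, ha₂, b₂, hb₂, rfl⟩ c ⟨hc₁, hc₂⟩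
  set a := max (min a₁ a₂) (c - max b₁ b₂)
  have ha : a ∈ uIcc a₁ a₂ := by
    refine ⟨le_max_left _ _, max_le (min_le_max) ?_⟩
    rw [sub_le_iff_le_add]
    exact hc₂.trans (add_le_add (le_max_right _ _) (le_max_right _ _))
  have hb : c - a ∈ uIcc b₁ b₂ := by
    refine ⟨?_, sub_le_comm.1 (le_max_right _ _)⟩
    rw [le_sub_comm]
    refine max_le ?_ (sub_le_sub_left min_le_max c)
    rw [le_sub_iff_add_le]
    exact (add_le_add (min_le_left _ _) (min_le_left _ _)).trans hc₁
  exact ⟨a, hs.uIcc_subset ha₁ ha₂ ha, c - a, ht.uIcc_subset hb₁ hb₂ hb, add_sub_cancel _ _⟩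

theorem Finset.sum_mul_sum_le_sum_mul_sum_of_minors {ι : Type*} [LinearOrder ι] (s : Finset ι)
    {x y u v : ι → ℝ} (hxy : ∀ k l, k < l → x l * y k ≤ x k * y l)
    (huv : ∀ k l, k < l → u l * v k ≤ u k * v l) :
    (∑ k ∈ s, x k * v k) * ∑ k ∈ s, y k * u k ≤ (∑ k ∈ s, x k * u k) * ∑ k ∈ s, y k * v k := by
  have hminors : ∀ k l, 0 ≤ (x k * y l - x l * y k) * (u k * v l - u l * v k) := by
    intro k l
    rcases lt_trichotomy k l with h | rfl | h
    · exact mul_nonneg (sub_nonneg.2 (hxy k l h)) (sub_nonneg.2 (huv k l h))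
    · simp
    · exact mul_nonneg_of_nonpos_of_nonpos (sub_nonpos.2 (hxy l k h)) (sub_nonpos.2 (huv l k h))
  set P : ι → ι → ℝ := fun k l => x k * u k * (y l * v l) - x k * v k * (y l * u l)
  have cauchy_binet : ∑ k ∈ s, ∑ l ∈ s, (x k * y l - x l * y k) * (u k * v l - u l * v k) =
      2 * ((∑ k ∈ s, x k * u k) * (∑ k ∈ s, y k * v k) -
        (∑ k ∈ s, x k * v k) * ∑ k ∈ s, y k * u k) :=
    calc _ = ∑ k ∈ s, ∑ l ∈ s, (P k l + P l k) := by
          refine Finset.sum_congr rfl fun k _ => Finset.sum_congr rfl fun l _ => ?_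
          ring
      _ = 2 * ∑ k ∈ s, ∑ l ∈ s, P k l := by
          simp only [Finset.sum_add_distrib]
          rw [Finset.sum_comm (f := fun k l => P l k)]
          ring
      _ = _ := by simp only [P, Finset.sum_sub_distrib, Finset.sum_mul_sum]
  have := Finset.sum_nonneg fun k (_ : k ∈ s) =>
    Finset.sum_nonneg fun l (_ : l ∈ s) => hminors k l
  linarith

structure IsLogConcaveSeq (f : ℤ → ℝ) : Prop where
  nonneg : 0 ≤ f
  mul_le_sq : ∀ k, f (k - 1) * f (k + 1) ≤ f k ^ 2
  ordConnected_support : (support f).OrdConnected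

namespace IsLogConcaveSeq

variable {f : ℤ → ℝ}

theorem pos_of_mem_Icc (hf : IsLogConcaveSeq f) {i j k : ℤ} (hi : f i ≠ 0) (hj : f j ≠ 0)
    (hk : k ∈ Icc i j) : 0 < f k :=
  (hf.nonneg k).lt_of_ne' (hf.ordConnected_support.out hi hj hk)

theorem mul_le_mul_of_le (hf : IsLogConcaveSeq f) {i j : ℤ} (hij : i ≤ j) :
    f (i - 1) * f (j + 1) ≤ f i * f j := by
  induction j, hij using Int.leInduction with
  | base => simpa [sq] using hf.mul_le_sq i
  | succ j hij ih =>
    by_cases h : f (i - 1) = 0 ∨ f (j + 1 + 1) = 0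
    · rcases h with h | h <;> simp [h, mul_nonneg (hf.nonneg _) (hf.nonneg _)]
    rw [not_or] at h
    have hj : 0 < f j := hf.pos_of_mem_Icc h.1 h.2 ⟨by omega, by omega⟩
    have hj₁ : 0 < f (j + 1) := hf.pos_of_mem_Icc h.1 h.2 ⟨by omega, by omega⟩
    have hlc := hf.mul_le_sq (j + 1)
    rw [add_sub_cancel_right] at hlc
    -- multiply `ih` by the log-concavity at `j + 1` and cancel `f j * f (j + 1)`
    refine le_of_mul_le_mul_right ?_ (mul_pos hj hj₁)
    calc f (i - 1) * f (j + 1 + 1) * (f j * f (j + 1))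
        = f (i - 1) * f (j + 1) * (f j * f (j + 1 + 1)) := by ring
      _ ≤ f i * f j * f (j + 1) ^ 2 :=
          _root_.mul_le_mul ih hlc (mul_nonneg (hf.nonneg _) (hf.nonneg _))
            (mul_nonneg (hf.nonneg _) (hf.nonneg _))
      _ = f i * f (j + 1) * (f j * f (j + 1)) := by ring

end IsLogConcaveSeq

theorem finsum_mul_finsum_le_finsum_mul_finsum_of_minors {ι : Type*} [LinearOrder ι]
    {x y u v : ι → ℝ} (hx : x.HasFiniteSupport) (hy : y.HasFiniteSupport)
    (hxy : ∀ k l, k < l → x l * y k ≤ x k * y l) (huv : ∀ k l, k < l → u l * v k ≤ u k * v l) :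
    (∑ᶠ k, x k * v k) * ∑ᶠ k, y k * u k ≤ (∑ᶠ k, x k * u k) * ∑ᶠ k, y k * v k := by
  set S := (Set.Finite.union hx hy).toFinset
  have hxS (w : ι → ℝ) : support (fun k => x k * w k) ⊆ S := fun k hk => by
    simpa [S] using Or.inl (left_ne_zero_of_mul hk)
  have hyS (w : ι → ℝ) : support (fun k => y k * w k) ⊆ S := fun k hk => by
    simpa [S] using Or.inr (left_ne_zero_of_mul hk)
  rw [finsum_eq_finsetSum_of_support_subset _ (hxS v),
    finsum_eq_finsetSum_of_support_subset _ (hxS u),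
    finsum_eq_finsetSum_of_support_subset _ (hyS v),
    finsum_eq_finsetSum_of_support_subset _ (hyS u)]
  exact S.sum_mul_sum_le_sum_mul_sum_of_minors hxy huv

noncomputable def intConv (f g : ℤ → ℝ) (i : ℤ) : ℝ :=
  ∑ᶠ k, f k * g (i - k)

section intConv

variable {f g : ℤ → ℝ}

theorem intConv_eq_finsum_shift (f g : ℤ → ℝ) (i n : ℤ) :
    intConv f g i = ∑ᶠ k, f (k - n) * g (i + n - k) := by
  rw [intConv, ← finsum_comp_equiv (Equiv.subRight n)]
  congr! 3 with k
  rw [Equiv.subRight_apply, sub_sub_eq_add_sub]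

theorem intConv_nonneg (hf : 0 ≤ f) (hg : 0 ≤ g) : 0 ≤ intConv f g :=
  fun _ => finsum_nonneg fun k => mul_nonneg (hf k) (hg _)

theorem support_intConv (hf : 0 ≤ f) (hg : 0 ≤ g) (hfin : f.HasFiniteSupport) :
    support (intConv f g) = support f + support g := by
  ext i
  constructor
  · intro hi
    obtain ⟨k, hk⟩ : ∃ k, f k * g (i - k) ≠ 0 := by
      by_contra! h
      exact hi (finsum_eq_zero_of_forall_eq_zero h)
    exact ⟨k, left_ne_zero_of_mul hk, i - k, right_ne_zero_of_mul hk, add_sub_cancel _ _⟩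
  · rintro ⟨k, hk, m, hm, rfl⟩
    refine (finsum_pos (fun l => mul_nonneg (hf l) (hg _)) ⟨k, ?_⟩ (hfin.mul_left _)).ne'
    rw [add_sub_cancel_left]
    exact mul_pos ((hf k).lt_of_ne' hk) ((hg m).lt_of_ne' hm)

end intConv

theorem isLogConcaveSeq_intConv {f g : ℤ → ℝ} (hf : IsLogConcaveSeq f) (hg : IsLogConcaveSeq g)
    (hfin : f.HasFiniteSupport) : IsLogConcaveSeq (intConv f g) where
  nonneg := intConv_nonneg hf.nonneg hg.nonneg
  mul_le_sq i := by
    have hshift : (support fun k => f (k - 1)).Finite :=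
      Set.Finite.preimage sub_left_injective.injOn hfin
    have hprev := intConv_eq_finsum_shift f g (i - 1) 1
    rw [sub_add_cancel] at hprev
    calc intConv f g (i - 1) * intConv f g (i + 1)
        = intConv f g (i + 1) * ∑ᶠ k, f (k - 1) * g (i - k) := by rw [hprev, mul_comm]
      _ ≤ intConv f g i * ∑ᶠ k, f (k - 1) * g (i + 1 - k) :=
          finsum_mul_finsum_le_finsum_mul_finsum_of_minors hfin hshift
            (fun k l hkl => by
              simpa [mul_comm] using hf.mul_le_mul_of_le (i := k) (j := l - 1) (by omega))
            (fun k l hkl => by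
              have := hg.mul_le_mul_of_le (i := i + 1 - l) (j := i - k) (by omega)
              rwa [show i + 1 - l - 1 = i - l by ring, show i - k + 1 = i + 1 - k by ring,
                mul_comm (g (i + 1 - l))] at this)
      _ = intConv f g i ^ 2 := by rw [← intConv_eq_finsum_shift, sq]
  ordConnected_support := by
    rw [support_intConv hf.nonneg hg.nonneg hfin]
    exact hf.ordConnected_support.add hg.ordConnected_support

noncomputable def extendByZero (a : ℕ → ℝ) (M : ℕ) : ℤ → ℝ :=
  (Icc 0 (M : ℤ)).indicator fun k => a k.toNat

section extendByZero

variable {a : ℕ → ℝ} {M : ℕ}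

theorem extendByZero_natCast {k : ℕ} (hk : k ≤ M) : extendByZero a M k = a k := by
  rw [extendByZero, indicator_of_mem (by simpa using hk), Int.toNat_natCast]

theorem extendByZero_eq_zero {k : ℤ} (hk : k < 0 ∨ (M : ℤ) < k) : extendByZero a M k = 0 :=
  indicator_of_notMem (by simp only [mem_Icc]; omega) _

theorem mem_Icc_of_extendByZero_ne_zero {k : ℤ} (hk : extendByZero a M k ≠ 0) :
    k ∈ Icc 0 (M : ℤ) :=
  not_not.1 fun h => hk (indicator_of_notMem h _)

theorem hasFiniteSupport_extendByZero : (extendByZero a M).HasFiniteSupport :=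
  (finite_Icc 0 (M : ℤ)).subset support_indicator_subset

theorem isLogConcaveSeq_extendByZero (ha0 : ∀ k ≤ M, 0 ≤ a k) (ha : IsLogConcave a M)
    (ha' : HasNoInternalZeros a M) : IsLogConcaveSeq (extendByZero a M) where
  nonneg := indicator_nonneg fun k hk => ha0 _ (by simp only [mem_Icc] at hk; omega)
  mul_le_sq k := by
    by_cases hk : 0 < k ∧ k < M
    · obtain ⟨n, rfl⟩ := Int.eq_ofNat_of_zero_le hk.1.le
      rw [show (n : ℤ) - 1 = (n - 1 : ℕ) by omega, show (n : ℤ) + 1 = (n + 1 : ℕ) by omega,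
        extendByZero_natCast (by omega), extendByZero_natCast (by omega),
        extendByZero_natCast (by omega)]
      exact ha n (by omega) (by omega)
    · rcases not_and_or.1 hk with hk | hk
      · rw [extendByZero_eq_zero (M := M) (Or.inl (by omega : k - 1 < 0)), zero_mul]
        positivity
      · rw [extendByZero_eq_zero (M := M) (Or.inr (by omega : (M : ℤ) < k + 1)), mul_zero]
        positivity
  ordConnected_support := by
    refine ⟨fun i hi j hj k hk => ?_⟩
    have hiM := mem_Icc_of_extendByZero_ne_zero hi
    have hjM := mem_Icc_of_extendByZero_ne_zero hj
    have hkM : k ∈ Icc 0 (M : ℤ) := ⟨hiM.1.trans hk.1, hk.2.trans hjM.2⟩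
    simp only [mem_support, extendByZero, indicator_of_mem hiM, indicator_of_mem hjM,
      indicator_of_mem hkM] at hi hj ⊢
    rcases hk.1.eq_or_lt with rfl | hik
    · exact hi
    rcases hk.2.eq_or_lt with rfl | hkj
    · exact hj
    have hi0 : 0 ≤ i := hiM.1
    have hjM' : j ≤ M := hjM.2
    exact ha' _ _ _ (by omega) (by omega) (by omega) hi hj

end extendByZero

theorem seqConv_eq_intConv (a b : ℕ → ℝ) (M N i : ℕ) :
    seqConv a M b N i = intConv (extendByZero a M) (extendByZero b N) i := by
  have hsupp : support (fun k => extendByZero a M k * extendByZero b N (i - k)) ⊆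
      ↑((Finset.range (M + 1)).map (Nat.castEmbedding : ℕ ↪ ℤ)) := by
    intro k hk
    obtain ⟨hk0, hkM⟩ := mem_Icc_of_extendByZero_ne_zero (left_ne_zero_of_mul hk)
    simp only [Finset.coe_map, Finset.coe_range, mem_image, mem_Iio]
    exact ⟨k.toNat, by omega, by simp [hk0]⟩
  rw [intConv, finsum_eq_finsetSum_of_support_subset _ hsupp, Finset.sum_map, seqConv,
    Finset.sum_filter]
  refine Finset.sum_congr rfl fun k hk => ?_
  rw [Finset.mem_range] at hk
  simp only [Nat.castEmbedding_apply, extendByZero_natCast (a := a) (by omega : k ≤ M)]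
  split_ifs with hki
  · rw [← Nat.cast_sub hki.1, extendByZero_natCast hki.2]
  · rw [extendByZero_eq_zero (by omega), mul_zero]

/-- The convolution of two nonnegative log-concave sequences with no internal zeros is a
nonnegative log-concave sequence with no internal zeros. -/
theorem logConcave_conv
    (a b : ℕ → ℝ) (M N : ℕ)
    (ha0 : ∀ k ≤ M, 0 ≤ a k) (hb0 : ∀ k ≤ N, 0 ≤ b k)
    (ha : IsLogConcave a M) (hb : IsLogConcave b N)
    (ha' : HasNoInternalZeros a M) (hb' : HasNoInternalZeros b N) :
    (∀ i ≤ M + N, 0 ≤ seqConv a M b N i) ∧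
      IsLogConcave (seqConv a M b N) (M + N) ∧
      HasNoInternalZeros (seqConv a M b N) (M + N) := by
  have hc := isLogConcaveSeq_intConv (isLogConcaveSeq_extendByZero ha0 ha ha')
    (isLogConcaveSeq_extendByZero hb0 hb hb') hasFiniteSupport_extendByZero
  refine ⟨fun i _ => ?_, fun k hk _ => ?_, fun i j l hij hjl _ hi hl => ?_⟩
  · rw [seqConv_eq_intConv]
    exact hc.nonneg i
  · rw [seqConv_eq_intConv, seqConv_eq_intConv, seqConv_eq_intConv, Nat.cast_sub hk,
      Nat.cast_add, Nat.cast_one]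
    exact hc.mul_le_sq k
  · rw [seqConv_eq_intConv] at hi hl ⊢
    exact hc.ordConnected_support.out hi hl ⟨by omega, by omega⟩
end
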